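/- arXiv:1303.6688 — 5 statements merged into one kernel-verified Lean document; each statement's English description precedes it below -/
import Mathlib

section
/- No Pontryagin extremal of the anaerobic bioreactor problem has both switching functions vanishing identically on a nondegenerate interval. Precisely: let a < b, let u1, u2 : [a,b] → [0,1] be measurable, let x3, x4, x5, x6, x7 : [a,b] → ℝ be absolutely continuous and satisfy the state system a.e. on [a,b] with x3(t), x4(t), x5(t) ≥ 0 and x6(t), x7(t) > 0 for all t ∈ [a,b], and let λ1, …, λ7 : [a,b] → ℝ be absolutely continuous and satisfy the adjoint system a.e. on [a,b]. Assume a1·b2 − a2·b1 ≠ 0, (b1 − b2)·μ̄ + (a2 − a1)·v̄ ≠ 0, and λ1(t) ≡ λ2(t) ≡ c on [a,b] with c ≠ 0. Then it is impossible that both λ1(t) + F·λ3(t) = 0 for all t ∈ [a,b] and λ2(t) + F·λ4(t) = 0 for all t ∈ [a,b]. -/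
/-!
On `[a,b]` the switching relations together with `λ1 ≡ λ2 ≡ c` pin down `λ3 ≡ λ4 ≡ k := -c/F`,
so the right-hand sides of the `λ3` and `λ4` adjoint equations vanish a.e. Because
`∂v_g/∂x3 > 0`, `∂v_z/∂x4 > 0`, `x6 > 0` and `μ`, `v_e` are affine in `(v_g, v_z)`, this is the
linear system `b2 λ5 + a2 λ6 = k`, `b1 λ5 + a1 λ6 = k`. As `a1 b2 - a2 b1 ≠ 0`, it makes `λ6`
a.e. constant, hence constant by continuity, so the `λ6` adjoint equation holds with zero
right-hand side. Substituting the linear system into it leaves `v̄ λ5 + μ̄ λ6 = 0`, i.e.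
`k ((b1 - b2) μ̄ + (a2 - a1) v̄) = 0`, which is excluded.
-/

open MeasureTheory Set

/-- Positive constants of the bioreactor uptake kinetics. -/
structure BioParams where
  vgmax : ℝ
  vzmax : ℝ
  kg : ℝ
  kieg : ℝ
  kz : ℝ
  kiez : ℝ
  kig : ℝ
  vgmax_pos : 0 < vgmax
  vzmax_pos : 0 < vzmax
  kg_pos : 0 < kg
  kieg_pos : 0 < kieg
  kz_pos : 0 < kz
  kiez_pos : 0 < kiez
  kig_pos : 0 < kig

/-- Glucose uptake rate `v_g(x3,x5,x7)`. -/
noncomputable def vg (P : BioParams) (x3 x5 x7 : ℝ) : ℝ :=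
  P.vgmax * x3 * x7 / ((P.kg * x7 + x3) * (x7 + x5 / P.kieg))

/-- Xylose uptake rate `v_z(x3,x4,x5,x7)`. -/
noncomputable def vz (P : BioParams) (x3 x4 x5 x7 : ℝ) : ℝ :=
  P.vzmax * x4 * x7 ^ 2 /
    ((P.kz * x7 + x4) * (x7 + x3 / P.kig) * (x7 + x5 / P.kiez))

/-- Coefficients of the affine growth rate and ethanol flux:
`μ = a1 v_g + a2 v_z + μ̄`, `v_e = b1 v_g + b2 v_z + v̄`. -/
structure AffineCoeffs where
  a1 : ℝ
  a2 : ℝ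
  b1 : ℝ
  b2 : ℝ
  mubar : ℝ
  vbar : ℝ
  a1_pos : 0 < a1
  a2_pos : 0 < a2
  b1_pos : 0 < b1
  b2_pos : 0 < b2
  mubar_pos : 0 < mubar

/-- Biomass growth rate `μ`. -/
noncomputable def mu (P : BioParams) (C : AffineCoeffs) (x3 x4 x5 x7 : ℝ) : ℝ :=
  C.a1 * vg P x3 x5 x7 + C.a2 * vz P x3 x4 x5 x7 + C.mubar

/-- Ethanol flux `v_e`. -/
noncomputable def ve (P : BioParams) (C : AffineCoeffs) (x3 x4 x5 x7 : ℝ) : ℝ :=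
  C.b1 * vg P x3 x5 x7 + C.b2 * vz P x3 x4 x5 x7 + C.vbar

/-- `∂v_g/∂x3`. -/
noncomputable def dvg_dx3 (P : BioParams) (x3 x5 x7 : ℝ) : ℝ :=
  deriv (fun y => vg P y x5 x7) x3

/-- `∂v_g/∂x5`. -/
noncomputable def dvg_dx5 (P : BioParams) (x3 x5 x7 : ℝ) : ℝ :=
  deriv (fun y => vg P x3 y x7) x5

/-- `∂v_g/∂x7`. -/
noncomputable def dvg_dx7 (P : BioParams) (x3 x5 x7 : ℝ) : ℝ :=
  deriv (fun y => vg P x3 x5 y) x7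

/-- `∂v_z/∂x3`. -/
noncomputable def dvz_dx3 (P : BioParams) (x3 x4 x5 x7 : ℝ) : ℝ :=
  deriv (fun y => vz P y x4 x5 x7) x3

/-- `∂v_z/∂x4`. -/
noncomputable def dvz_dx4 (P : BioParams) (x3 x4 x5 x7 : ℝ) : ℝ :=
  deriv (fun y => vz P x3 y x5 x7) x4

/-- `∂v_z/∂x5`. -/
noncomputable def dvz_dx5 (P : BioParams) (x3 x4 x5 x7 : ℝ) : ℝ :=
  deriv (fun y => vz P x3 x4 y x7) x5

/-- `∂v_z/∂x7`. -/
noncomputable def dvz_dx7 (P : BioParams) (x3 x4 x5 x7 : ℝ) : ℝ :=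
  deriv (fun y => vz P x3 x4 x5 y) x7

/-- `∂μ/∂x3`. -/
noncomputable def dmu_dx3 (P : BioParams) (C : AffineCoeffs) (x3 x4 x5 x7 : ℝ) : ℝ :=
  deriv (fun y => mu P C y x4 x5 x7) x3

/-- `∂μ/∂x4`. -/
noncomputable def dmu_dx4 (P : BioParams) (C : AffineCoeffs) (x3 x4 x5 x7 : ℝ) : ℝ :=
  deriv (fun y => mu P C x3 y x5 x7) x4

/-- `∂μ/∂x5`. -/
noncomputable def dmu_dx5 (P : BioParams) (C : AffineCoeffs) (x3 x4 x5 x7 : ℝ) : ℝ :=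
  deriv (fun y => mu P C x3 x4 y x7) x5

/-- `∂μ/∂x7`. -/
noncomputable def dmu_dx7 (P : BioParams) (C : AffineCoeffs) (x3 x4 x5 x7 : ℝ) : ℝ :=
  deriv (fun y => mu P C x3 x4 x5 y) x7

/-- `∂v_e/∂x3`. -/
noncomputable def dve_dx3 (P : BioParams) (C : AffineCoeffs) (x3 x4 x5 x7 : ℝ) : ℝ :=
  deriv (fun y => ve P C y x4 x5 x7) x3

/-- `∂v_e/∂x4`. -/
noncomputable def dve_dx4 (P : BioParams) (C : AffineCoeffs) (x3 x4 x5 x7 : ℝ) : ℝ :=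
  deriv (fun y => ve P C x3 y x5 x7) x4

/-- `∂v_e/∂x5`. -/
noncomputable def dve_dx5 (P : BioParams) (C : AffineCoeffs) (x3 x4 x5 x7 : ℝ) : ℝ :=
  deriv (fun y => ve P C x3 x4 y x7) x5

/-- `∂v_e/∂x7`. -/
noncomputable def dve_dx7 (P : BioParams) (C : AffineCoeffs) (x3 x4 x5 x7 : ℝ) : ℝ :=
  deriv (fun y => ve P C x3 x4 x5 y) x7

/-- `x` is absolutely continuous on `[a,b]` and satisfies `ẋ = f` a.e. there,
expressed in integral form. -/
def SolvesODE (x f : ℝ → ℝ) (a b : ℝ) : Prop :=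
  IntervalIntegrable f MeasureTheory.volume a b ∧
    ∀ t ∈ Set.Icc a b, x t = x a + ∫ s in a..t, f s

open Topology

namespace SolvesODE

variable {x f : ℝ → ℝ} {a b : ℝ}

theorem continuousOn (hx : SolvesODE x f a b) : ContinuousOn x (Icc a b) := by
  have hprim : ContinuousOn (fun t => x a + ∫ s in a..t, f s) (uIcc a b) :=
    continuousOn_const.add
      (intervalIntegral.continuousOn_primitive_interval' hx.1 left_mem_uIcc)
  exact (hprim.mono Icc_subset_uIcc).congr hx.2

theorem ae_eq_zero_of_eq_const {L : ℝ} (hx : SolvesODE x f a b)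
    (hL : ∀ t ∈ Ioo a b, x t = L) : ∀ᵐ t ∂volume.restrict (Ioo a b), f t = 0 := by
  filter_upwards [ae_restrict_mem measurableSet_Ioo,
    ae_restrict_of_ae hx.1.ae_hasDerivAt_integral] with t ht hderiv
  have hprim := hderiv (Ioo_subset_Icc_self.trans Icc_subset_uIcc ht) a left_mem_uIcc
  have hconst : (fun s => ∫ u in a..s, f u) =ᶠ[𝓝 t] fun _ => L - x a := by
    filter_upwards [Ioo_mem_nhds ht.1 ht.2] with s hs
    rw [← hL s hs, hx.2 s (Ioo_subset_Icc_self hs)]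
    ring
  exact hprim.unique ((hasDerivAt_const t _).congr_of_eventuallyEq hconst)

theorem eq_const_of_ae_eq_const {L : ℝ} (hx : SolvesODE x f a b)
    (hL : ∀ᵐ t ∂volume.restrict (Ioo a b), x t = L) : ∀ t ∈ Ioo a b, x t = L :=
  Measure.eqOn_open_of_ae_eq hL isOpen_Ioo (hx.continuousOn.mono Ioo_subset_Icc_self)
    continuousOn_const

end SolvesODE

theorem hasDerivAt_mul_div_add (A K y : ℝ) (h : K + y ≠ 0) :
    HasDerivAt (fun y => A * y / (K + y)) (A * K / (K + y) ^ 2) y := by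
  refine (((hasDerivAt_id' y).const_mul A).div ((hasDerivAt_id' y).const_add K) h).congr_deriv ?_
  ring

theorem deriv_mul_add_mul_add {g h : ℝ → ℝ} {y : ℝ} (hg : DifferentiableAt ℝ g y)
    (hh : DifferentiableAt ℝ h y) (p q r : ℝ) :
    deriv (fun y => p * g y + q * h y + r) y = p * deriv g y + q * deriv h y :=
  (((hg.hasDerivAt.const_mul p).add (hh.hasDerivAt.const_mul q)).add_const r).deriv

section Kinetics

variable (P : BioParams) (C : AffineCoeffs) {x3 x4 x5 x7 : ℝ}

theorem hasDerivAt_vg_x3 (h3 : 0 ≤ x3) (h7 : 0 < x7) :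
    HasDerivAt (fun y => vg P y x5 x7)
      (P.vgmax * x7 / (x7 + x5 / P.kieg) * (P.kg * x7) / (P.kg * x7 + x3) ^ 2) x3 := by
  have := P.kg_pos
  convert hasDerivAt_mul_div_add (P.vgmax * x7 / (x7 + x5 / P.kieg)) (P.kg * x7) x3
    (by positivity) using 1
  funext y
  simp only [vg, div_eq_mul_inv, mul_inv]
  ring

theorem hasDerivAt_vz_x4 (h4 : 0 ≤ x4) (h7 : 0 < x7) :
    HasDerivAt (fun y => vz P x3 y x5 x7)
      (P.vzmax * x7 ^ 2 / ((x7 + x3 / P.kig) * (x7 + x5 / P.kiez)) * (P.kz * x7) /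
        (P.kz * x7 + x4) ^ 2) x4 := by
  have := P.kz_pos
  convert hasDerivAt_mul_div_add (P.vzmax * x7 ^ 2 / ((x7 + x3 / P.kig) * (x7 + x5 / P.kiez)))
    (P.kz * x7) x4 (by positivity) using 1
  funext y
  simp only [vz, div_eq_mul_inv, mul_inv]
  ring

theorem differentiableAt_vz_x3 (h3 : 0 ≤ x3) (h4 : 0 ≤ x4) (h5 : 0 ≤ x5) (h7 : 0 < x7) :
    DifferentiableAt ℝ (fun y => vz P y x4 x5 x7) x3 := by
  have := P.kz_pos
  have := P.kig_pos
  have := P.kiez_pos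
  unfold vz
  fun_prop (disch := positivity)

theorem dvg_dx3_pos (h3 : 0 ≤ x3) (h5 : 0 ≤ x5) (h7 : 0 < x7) : 0 < dvg_dx3 P x3 x5 x7 := by
  have := P.vgmax_pos
  have := P.kg_pos
  have := P.kieg_pos
  rw [dvg_dx3, (hasDerivAt_vg_x3 P h3 h7).deriv]
  positivity

theorem dvz_dx4_pos (h3 : 0 ≤ x3) (h4 : 0 ≤ x4) (h5 : 0 ≤ x5) (h7 : 0 < x7) :
    0 < dvz_dx4 P x3 x4 x5 x7 := by
  have := P.vzmax_pos
  have := P.kz_pos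
  have := P.kig_pos
  have := P.kiez_pos
  rw [dvz_dx4, (hasDerivAt_vz_x4 P h4 h7).deriv]
  positivity

theorem dve_dx3_eq (h3 : 0 ≤ x3) (h4 : 0 ≤ x4) (h5 : 0 ≤ x5) (h7 : 0 < x7) :
    dve_dx3 P C x3 x4 x5 x7 = C.b1 * dvg_dx3 P x3 x5 x7 + C.b2 * dvz_dx3 P x3 x4 x5 x7 :=
  deriv_mul_add_mul_add (hasDerivAt_vg_x3 P h3 h7).differentiableAt
    (differentiableAt_vz_x3 P h3 h4 h5 h7) _ _ _

theorem dmu_dx3_eq (h3 : 0 ≤ x3) (h4 : 0 ≤ x4) (h5 : 0 ≤ x5) (h7 : 0 < x7) :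
    dmu_dx3 P C x3 x4 x5 x7 = C.a1 * dvg_dx3 P x3 x5 x7 + C.a2 * dvz_dx3 P x3 x4 x5 x7 :=
  deriv_mul_add_mul_add (hasDerivAt_vg_x3 P h3 h7).differentiableAt
    (differentiableAt_vz_x3 P h3 h4 h5 h7) _ _ _

theorem dve_dx4_eq (h4 : 0 ≤ x4) (h7 : 0 < x7) :
    dve_dx4 P C x3 x4 x5 x7 = C.b2 * dvz_dx4 P x3 x4 x5 x7 :=
  (deriv_mul_add_mul_add (g := fun _ => vg P x3 x5 x7) (differentiableAt_const _)
    (hasDerivAt_vz_x4 P h4 h7).differentiableAt _ _ _).trans (by simp [dvz_dx4])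

theorem dmu_dx4_eq (h4 : 0 ≤ x4) (h7 : 0 < x7) :
    dmu_dx4 P C x3 x4 x5 x7 = C.a2 * dvz_dx4 P x3 x4 x5 x7 :=
  (deriv_mul_add_mul_add (g := fun _ => vg P x3 x5 x7) (differentiableAt_const _)
    (hasDerivAt_vz_x4 P h4 h7).differentiableAt _ _ _).trans (by simp [dvz_dx4])

end Kinetics

section SingularArc

variable (P : BioParams) (C : AffineCoeffs) {x3 x4 x5 x6 x7 l l5 l6 : ℝ}

theorem b2_mul_add_a2_mul_eq_of_adjoint4 (h3 : 0 ≤ x3) (h4 : 0 ≤ x4) (h5 : 0 ≤ x5)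
    (h6 : 0 < x6) (h7 : 0 < x7)
    (h : x6 * (dvz_dx4 P x3 x4 x5 x7 * l - dve_dx4 P C x3 x4 x5 x7 * l5 -
      dmu_dx4 P C x3 x4 x5 x7 * l6) = 0) :
    C.b2 * l5 + C.a2 * l6 = l := by
  rw [dve_dx4_eq P C h4 h7, dmu_dx4_eq P C h4 h7] at h
  have hfactor : x6 * dvz_dx4 P x3 x4 x5 x7 * (l - (C.b2 * l5 + C.a2 * l6)) = 0 := by
    linear_combination h
  have hpos : x6 * dvz_dx4 P x3 x4 x5 x7 ≠ 0 := (mul_pos h6 (dvz_dx4_pos P h3 h4 h5 h7)).ne'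
  linarith [(mul_eq_zero.1 hfactor).resolve_left hpos]

theorem b1_mul_add_a1_mul_eq_of_adjoint3 (h3 : 0 ≤ x3) (h4 : 0 ≤ x4) (h5 : 0 ≤ x5)
    (h6 : 0 < x6) (h7 : 0 < x7) (hrel : C.b2 * l5 + C.a2 * l6 = l)
    (h : x6 * (dvg_dx3 P x3 x5 x7 * l + dvz_dx3 P x3 x4 x5 x7 * l -
      dve_dx3 P C x3 x4 x5 x7 * l5 - dmu_dx3 P C x3 x4 x5 x7 * l6) = 0) :
    C.b1 * l5 + C.a1 * l6 = l := by
  rw [dve_dx3_eq P C h3 h4 h5 h7, dmu_dx3_eq P C h3 h4 h5 h7] at h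
  have hfactor : x6 * dvg_dx3 P x3 x5 x7 * (l - (C.b1 * l5 + C.a1 * l6)) = 0 := by
    linear_combination h + x6 * dvz_dx3 P x3 x4 x5 x7 * hrel
  have hpos : x6 * dvg_dx3 P x3 x5 x7 ≠ 0 := (mul_pos h6 (dvg_dx3_pos P h3 h5 h7)).ne'
  linarith [(mul_eq_zero.1 hfactor).resolve_left hpos]

theorem adjoint6_rhs_ne_zero (hl : l ≠ 0)
    (hnd : (C.b1 - C.b2) * C.mubar + (C.a2 - C.a1) * C.vbar ≠ 0)
    (hrel2 : C.b2 * l5 + C.a2 * l6 = l) (hrel1 : C.b1 * l5 + C.a1 * l6 = l) :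
    vg P x3 x5 x7 * l + vz P x3 x4 x5 x7 * l - ve P C x3 x4 x5 x7 * l5 -
      mu P C x3 x4 x5 x7 * l6 ≠ 0 := by
  intro h
  have hv : C.vbar * l5 + C.mubar * l6 = 0 := by
    unfold ve mu at h
    linear_combination -h - vg P x3 x5 x7 * hrel1 - vz P x3 x4 x5 x7 * hrel2
  have hk : l * ((C.b1 - C.b2) * C.mubar + (C.a2 - C.a1) * C.vbar) = 0 := by
    linear_combination (C.b1 * C.a2 - C.b2 * C.a1) * hv + (C.vbar * C.a1 - C.mubar * C.b1) * hrel2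
      + (C.mubar * C.b2 - C.vbar * C.a2) * hrel1
  exact hnd ((mul_eq_zero.1 hk).resolve_left hl)

end SingularArc

theorem stmt0_general (P : BioParams) (C : AffineCoeffs) (F : ℝ) (hF : 0 < F)
    (a b : ℝ) (hab : a < b)
    -- absolutely continuous state trajectory satisfying the state system a.e.
    (x3 x4 x5 x6 x7 : ℝ → ℝ)
    -- sign conditions on the states
    (h3 : ∀ t ∈ Set.Icc a b, 0 ≤ x3 t) (h4 : ∀ t ∈ Set.Icc a b, 0 ≤ x4 t)
    (h5 : ∀ t ∈ Set.Icc a b, 0 ≤ x5 t)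
    (h6 : ∀ t ∈ Set.Icc a b, 0 < x6 t) (h7 : ∀ t ∈ Set.Icc a b, 0 < x7 t)
    -- absolutely continuous adjoint vector satisfying the adjoint system a.e.
    (l1 l2 l3 l4 l5 l6 : ℝ → ℝ)
    (hl3 : SolvesODE l3
      (fun s => x6 s * (dvg_dx3 P (x3 s) (x5 s) (x7 s) * l3 s +
          dvz_dx3 P (x3 s) (x4 s) (x5 s) (x7 s) * l4 s -
          dve_dx3 P C (x3 s) (x4 s) (x5 s) (x7 s) * l5 s -
          dmu_dx3 P C (x3 s) (x4 s) (x5 s) (x7 s) * l6 s)) a b)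
    (hl4 : SolvesODE l4
      (fun s => x6 s * (dvz_dx4 P (x3 s) (x4 s) (x5 s) (x7 s) * l4 s -
          dve_dx4 P C (x3 s) (x4 s) (x5 s) (x7 s) * l5 s -
          dmu_dx4 P C (x3 s) (x4 s) (x5 s) (x7 s) * l6 s)) a b)
    (hl6 : SolvesODE l6
      (fun s => vg P (x3 s) (x5 s) (x7 s) * l3 s +
          vz P (x3 s) (x4 s) (x5 s) (x7 s) * l4 s -
          ve P C (x3 s) (x4 s) (x5 s) (x7 s) * l5 s -
          mu P C (x3 s) (x4 s) (x5 s) (x7 s) * l6 s) a b)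
    -- structural assumptions
    (hdet : C.a1 * C.b2 - C.a2 * C.b1 ≠ 0)
    (hnd : (C.b1 - C.b2) * C.mubar + (C.a2 - C.a1) * C.vbar ≠ 0)
    (c : ℝ) (hc : c ≠ 0)
    (hl1c : ∀ t ∈ Set.Icc a b, l1 t = c) (hl2c : ∀ t ∈ Set.Icc a b, l2 t = c) :
    ¬ ((∀ t ∈ Set.Icc a b, l1 t + F * l3 t = 0) ∧
        (∀ t ∈ Set.Icc a b, l2 t + F * l4 t = 0)) := by
  rintro ⟨hφ1, hφ2⟩
  set k := -c / F
  have hk : k ≠ 0 := div_ne_zero (neg_ne_zero.2 hc) hF.ne'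
  have hl3k : ∀ t ∈ Icc a b, l3 t = k := fun t ht => by
    rw [eq_div_iff hF.ne']; linear_combination hφ1 t ht - hl1c t ht
  have hl4k : ∀ t ∈ Icc a b, l4 t = k := fun t ht => by
    rw [eq_div_iff hF.ne']; linear_combination hφ2 t ht - hl2c t ht
  have hrel : ∀ᵐ t ∂volume.restrict (Ioo a b),
      C.b2 * l5 t + C.a2 * l6 t = k ∧ C.b1 * l5 t + C.a1 * l6 t = k := by
    filter_upwards [ae_restrict_mem measurableSet_Ioo,
      hl3.ae_eq_zero_of_eq_const fun t ht => hl3k t (Ioo_subset_Icc_self ht),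
      hl4.ae_eq_zero_of_eq_const fun t ht => hl4k t (Ioo_subset_Icc_self ht)] with t ht hd3 hd4
    replace ht := Ioo_subset_Icc_self ht
    simp only [hl3k t ht, hl4k t ht] at hd3 hd4
    have hrel2 := b2_mul_add_a2_mul_eq_of_adjoint4 P C (h3 t ht) (h4 t ht) (h5 t ht) (h6 t ht)
      (h7 t ht) hd4
    exact ⟨hrel2, b1_mul_add_a1_mul_eq_of_adjoint3 P C (h3 t ht) (h4 t ht) (h5 t ht) (h6 t ht)
      (h7 t ht) hrel2 hd3⟩
  have hl6const : ∀ t ∈ Ioo a b, l6 t = k * (C.b2 - C.b1) / (C.a1 * C.b2 - C.a2 * C.b1) :=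
    hl6.eq_const_of_ae_eq_const <| hrel.mono fun t ⟨hrel2, hrel1⟩ => by
      rw [eq_div_iff hdet]; linear_combination C.b2 * hrel1 - C.b1 * hrel2
  have : (ae (volume.restrict (Ioo a b))).NeBot := ae_restrict_neBot.2 (by simp [hab])
  obtain ⟨t, ht, ⟨hrel2, hrel1⟩, hd6⟩ := ((ae_restrict_mem measurableSet_Ioo).and
    (hrel.and (hl6.ae_eq_zero_of_eq_const hl6const))).exists
  replace ht := Ioo_subset_Icc_self ht
  rw [hl3k t ht, hl4k t ht] at hd6
  exact adjoint6_rhs_ne_zero P C hk hnd hrel2 hrel1 hd6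

/-- no Pontryagin extremal of the anaerobic bioreactor problem has both
switching functions `φ1 = λ1 + F λ3` and `φ2 = λ2 + F λ4` vanishing identically on a
nondegenerate interval `[a,b]`, provided `a1 b2 - a2 b1 ≠ 0`,
`(b1 - b2) μ̄ + (a2 - a1) v̄ ≠ 0` and `λ1 ≡ λ2 ≡ c ≠ 0`. -/
theorem stmt0 (P : BioParams) (C : AffineCoeffs) (F : ℝ) (hF : 0 < F)
    (a b : ℝ) (hab : a < b)
    -- measurable controls with values in `[0,1]`
    (u1 u2 : ℝ → ℝ) (hu1m : Measurable u1) (hu2m : Measurable u2)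
    (hu1 : ∀ t ∈ Set.Icc a b, u1 t ∈ Set.Icc (0:ℝ) 1)
    (hu2 : ∀ t ∈ Set.Icc a b, u2 t ∈ Set.Icc (0:ℝ) 1)
    -- absolutely continuous state trajectory satisfying the state system a.e.
    (x3 x4 x5 x6 x7 : ℝ → ℝ)
    (hx3 : SolvesODE x3
      (fun s => F * u1 s - vg P (x3 s) (x5 s) (x7 s) * x6 s) a b)
    (hx4 : SolvesODE x4
      (fun s => F * u2 s - vz P (x3 s) (x4 s) (x5 s) (x7 s) * x6 s) a b)
    (hx5 : SolvesODE x5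
      (fun s => ve P C (x3 s) (x4 s) (x5 s) (x7 s) * x6 s) a b)
    (hx6 : SolvesODE x6
      (fun s => mu P C (x3 s) (x4 s) (x5 s) (x7 s) * x6 s) a b)
    (hx7 : SolvesODE x7 (fun _ => F) a b)
    -- sign conditions on the states
    (h3 : ∀ t ∈ Set.Icc a b, 0 ≤ x3 t) (h4 : ∀ t ∈ Set.Icc a b, 0 ≤ x4 t)
    (h5 : ∀ t ∈ Set.Icc a b, 0 ≤ x5 t)
    (h6 : ∀ t ∈ Set.Icc a b, 0 < x6 t) (h7 : ∀ t ∈ Set.Icc a b, 0 < x7 t)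
    -- absolutely continuous adjoint vector satisfying the adjoint system a.e.
    (l1 l2 l3 l4 l5 l6 l7 : ℝ → ℝ)
    (hl1 : SolvesODE l1 (fun _ => 0) a b) (hl2 : SolvesODE l2 (fun _ => 0) a b)
    (hl3 : SolvesODE l3
      (fun s => x6 s * (dvg_dx3 P (x3 s) (x5 s) (x7 s) * l3 s +
          dvz_dx3 P (x3 s) (x4 s) (x5 s) (x7 s) * l4 s -
          dve_dx3 P C (x3 s) (x4 s) (x5 s) (x7 s) * l5 s -
          dmu_dx3 P C (x3 s) (x4 s) (x5 s) (x7 s) * l6 s)) a b)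
    (hl4 : SolvesODE l4
      (fun s => x6 s * (dvz_dx4 P (x3 s) (x4 s) (x5 s) (x7 s) * l4 s -
          dve_dx4 P C (x3 s) (x4 s) (x5 s) (x7 s) * l5 s -
          dmu_dx4 P C (x3 s) (x4 s) (x5 s) (x7 s) * l6 s)) a b)
    (hl5 : SolvesODE l5
      (fun s => x6 s * (dvg_dx5 P (x3 s) (x5 s) (x7 s) * l3 s +
          dvz_dx5 P (x3 s) (x4 s) (x5 s) (x7 s) * l4 s -
          dve_dx5 P C (x3 s) (x4 s) (x5 s) (x7 s) * l5 s -
          dmu_dx5 P C (x3 s) (x4 s) (x5 s) (x7 s) * l6 s)) a b)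
    (hl6 : SolvesODE l6
      (fun s => vg P (x3 s) (x5 s) (x7 s) * l3 s +
          vz P (x3 s) (x4 s) (x5 s) (x7 s) * l4 s -
          ve P C (x3 s) (x4 s) (x5 s) (x7 s) * l5 s -
          mu P C (x3 s) (x4 s) (x5 s) (x7 s) * l6 s) a b)
    (hl7 : SolvesODE l7
      (fun s => x6 s * (dvg_dx7 P (x3 s) (x5 s) (x7 s) * l3 s +
          dvz_dx7 P (x3 s) (x4 s) (x5 s) (x7 s) * l4 s -
          dve_dx7 P C (x3 s) (x4 s) (x5 s) (x7 s) * l5 s -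
          dmu_dx7 P C (x3 s) (x4 s) (x5 s) (x7 s) * l6 s)) a b)
    -- structural assumptions
    (hdet : C.a1 * C.b2 - C.a2 * C.b1 ≠ 0)
    (hnd : (C.b1 - C.b2) * C.mubar + (C.a2 - C.a1) * C.vbar ≠ 0)
    (c : ℝ) (hc : c ≠ 0)
    (hl1c : ∀ t ∈ Set.Icc a b, l1 t = c) (hl2c : ∀ t ∈ Set.Icc a b, l2 t = c) :
    ¬ ((∀ t ∈ Set.Icc a b, l1 t + F * l3 t = 0) ∧
        (∀ t ∈ Set.Icc a b, l2 t + F * l4 t = 0)) :=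
  stmt0_general P C F hF a b hab x3 x4 x5 x6 x7 h3 h4 h5 h6 h7 l1 l2 l3 l4 l5 l6 hl3 hl4 hl6 hdet
    hnd c hc hl1c hl2c
end

section
/- For all x3, x4, x5 ≥ 0 and x7 > 0, the determinant of the 2×2 matrix with rows (∂v_e/∂x3, ∂μ/∂x3) and (∂v_e/∂x4, ∂μ/∂x4) equals (a2·b1 − a1·b2)·(∂v_g/∂x3)·(∂v_z/∂x4), where moreover ∂v_g/∂x3 > 0 and ∂v_z/∂x4 > 0 at such points; consequently this determinant is nonzero if and only if a1·b2 − a2·b1 ≠ 0. -/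
open MeasureTheory Set

/-! For fixed `x5, x7`, `v_g` is a Michaelis–Menten function of `x3`, and for fixed `x3, x5, x7`,
`v_z` is one of `x4`; both are therefore strictly increasing in these variables. Since `μ` and
`v_e` are affine in `(v_g, v_z)` and `v_g` does not depend on `x4`, the Jacobian determinant
factors as `(a2 b1 - a1 b2) · ∂v_g/∂x3 · ∂v_z/∂x4`. -/

noncomputable def michaelisMenten (vmax K t : ℝ) : ℝ :=
  vmax * t / (K + t)

theorem hasDerivAt_michaelisMenten (vmax K y : ℝ) (hy : K + y ≠ 0) :
    HasDerivAt (michaelisMenten vmax K) (vmax * K / (K + y) ^ 2) y := by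
  refine (((hasDerivAt_id' y).const_mul vmax).div
    ((hasDerivAt_id' y).const_add K) hy).congr_deriv ?_
  ring

theorem deriv_michaelisMenten_pos {vmax K y : ℝ} (hvmax : 0 < vmax) (hK : 0 < K) (hy : 0 ≤ y) :
    0 < deriv (michaelisMenten vmax K) y := by
  rw [(hasDerivAt_michaelisMenten vmax K y (by positivity)).deriv]
  positivity

theorem deriv_affine_comb {f g : ℝ → ℝ} {x : ℝ} (hf : DifferentiableAt ℝ f x)
    (hg : DifferentiableAt ℝ g x) (a b c : ℝ) :
    deriv (fun y => a * f y + b * g y + c) x = a * deriv f x + b * deriv g x :=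
  (((hf.hasDerivAt.const_mul a).add (hg.hasDerivAt.const_mul b)).add_const c).deriv

namespace BioParams

variable (P : BioParams) {x3 x4 x5 x7 : ℝ}

theorem vg_eq_michaelisMenten (x3 x5 x7 : ℝ) :
    vg P x3 x5 x7 = michaelisMenten (P.vgmax * x7 / (x7 + x5 / P.kieg)) (P.kg * x7) x3 := by
  unfold vg michaelisMenten
  rw [div_mul_eq_div_div_swap]
  ring

theorem vz_eq_michaelisMenten (x3 x4 x5 x7 : ℝ) :
    vz P x3 x4 x5 x7 = michaelisMenten
      (P.vzmax * x7 ^ 2 / ((x7 + x3 / P.kig) * (x7 + x5 / P.kiez))) (P.kz * x7) x4 := by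
  unfold vz michaelisMenten
  rw [mul_assoc (P.kz * x7 + x4), div_mul_eq_div_div_swap]
  ring

theorem differentiableAt_vg_x3 (h3 : 0 ≤ x3) (h7 : 0 < x7) :
    DifferentiableAt ℝ (fun y => vg P y x5 x7) x3 := by
  simp only [vg_eq_michaelisMenten]
  exact (hasDerivAt_michaelisMenten _ _ _ (by have := P.kg_pos; positivity)).differentiableAt

theorem differentiableAt_vz_x3 (h3 : 0 ≤ x3) (h4 : 0 ≤ x4) (h5 : 0 ≤ x5) (h7 : 0 < x7) :
    DifferentiableAt ℝ (fun y => vz P y x4 x5 x7) x3 := by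
  have := P.kz_pos; have := P.kig_pos; have := P.kiez_pos
  unfold vz
  fun_prop (disch := positivity)

theorem differentiableAt_vz_x4 (h4 : 0 ≤ x4) (h7 : 0 < x7) :
    DifferentiableAt ℝ (fun y => vz P x3 y x5 x7) x4 := by
  simp only [vz_eq_michaelisMenten]
  exact (hasDerivAt_michaelisMenten _ _ _ (by have := P.kz_pos; positivity)).differentiableAt

theorem dvg_dx3_pos (h3 : 0 ≤ x3) (h5 : 0 ≤ x5) (h7 : 0 < x7) : 0 < dvg_dx3 P x3 x5 x7 := by
  have := P.vgmax_pos; have := P.kg_pos; have := P.kieg_pos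
  simp only [dvg_dx3, vg_eq_michaelisMenten]
  exact deriv_michaelisMenten_pos (by positivity) (by positivity) h3

theorem dvz_dx4_pos (h3 : 0 ≤ x3) (h4 : 0 ≤ x4) (h5 : 0 ≤ x5) (h7 : 0 < x7) :
    0 < dvz_dx4 P x3 x4 x5 x7 := by
  have := P.vzmax_pos; have := P.kz_pos; have := P.kig_pos; have := P.kiez_pos
  simp only [dvz_dx4, vz_eq_michaelisMenten]
  exact deriv_michaelisMenten_pos (by positivity) (by positivity) h4

variable (C : AffineCoeffs)

theorem dmu_dx3_eq (h3 : 0 ≤ x3) (h4 : 0 ≤ x4) (h5 : 0 ≤ x5) (h7 : 0 < x7) :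
    dmu_dx3 P C x3 x4 x5 x7 = C.a1 * dvg_dx3 P x3 x5 x7 + C.a2 * dvz_dx3 P x3 x4 x5 x7 :=
  deriv_affine_comb (P.differentiableAt_vg_x3 h3 h7) (P.differentiableAt_vz_x3 h3 h4 h5 h7) _ _ _

theorem dve_dx3_eq (h3 : 0 ≤ x3) (h4 : 0 ≤ x4) (h5 : 0 ≤ x5) (h7 : 0 < x7) :
    dve_dx3 P C x3 x4 x5 x7 = C.b1 * dvg_dx3 P x3 x5 x7 + C.b2 * dvz_dx3 P x3 x4 x5 x7 :=
  deriv_affine_comb (P.differentiableAt_vg_x3 h3 h7) (P.differentiableAt_vz_x3 h3 h4 h5 h7) _ _ _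

theorem dmu_dx4_eq (h4 : 0 ≤ x4) (h7 : 0 < x7) :
    dmu_dx4 P C x3 x4 x5 x7 = C.a2 * dvz_dx4 P x3 x4 x5 x7 := by
  have h := deriv_affine_comb (differentiableAt_const (vg P x3 x5 x7))
    (P.differentiableAt_vz_x4 (x3 := x3) (x5 := x5) h4 h7) C.a1 C.a2 C.mubar
  rwa [deriv_const, mul_zero, zero_add] at h

theorem dve_dx4_eq (h4 : 0 ≤ x4) (h7 : 0 < x7) :
    dve_dx4 P C x3 x4 x5 x7 = C.b2 * dvz_dx4 P x3 x4 x5 x7 := by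
  have h := deriv_affine_comb (differentiableAt_const (vg P x3 x5 x7))
    (P.differentiableAt_vz_x4 (x3 := x3) (x5 := x5) h4 h7) C.b1 C.b2 C.vbar
  rwa [deriv_const, mul_zero, zero_add] at h

end BioParams

/-- for `x3, x4, x5 ≥ 0` and `x7 > 0`, the determinant of the matrix with
rows `(∂v_e/∂x3, ∂μ/∂x3)` and `(∂v_e/∂x4, ∂μ/∂x4)` equals
`(a2 b1 - a1 b2) ∂v_g/∂x3 ∂v_z/∂x4`, with `∂v_g/∂x3 > 0` and `∂v_z/∂x4 > 0`;
consequently the determinant is nonzero iff `a1 b2 - a2 b1 ≠ 0`. -/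
theorem stmt1 (P : BioParams) (C : AffineCoeffs) (x3 x4 x5 x7 : ℝ)
    (h3 : 0 ≤ x3) (h4 : 0 ≤ x4) (h5 : 0 ≤ x5) (h7 : 0 < x7) :
    dve_dx3 P C x3 x4 x5 x7 * dmu_dx4 P C x3 x4 x5 x7 -
        dmu_dx3 P C x3 x4 x5 x7 * dve_dx4 P C x3 x4 x5 x7 =
      (C.a2 * C.b1 - C.a1 * C.b2) * dvg_dx3 P x3 x5 x7 * dvz_dx4 P x3 x4 x5 x7 ∧
    0 < dvg_dx3 P x3 x5 x7 ∧ 0 < dvz_dx4 P x3 x4 x5 x7 ∧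
    (dve_dx3 P C x3 x4 x5 x7 * dmu_dx4 P C x3 x4 x5 x7 -
        dmu_dx3 P C x3 x4 x5 x7 * dve_dx4 P C x3 x4 x5 x7 ≠ 0 ↔
      C.a1 * C.b2 - C.a2 * C.b1 ≠ 0) := by
  have hdet : dve_dx3 P C x3 x4 x5 x7 * dmu_dx4 P C x3 x4 x5 x7 -
      dmu_dx3 P C x3 x4 x5 x7 * dve_dx4 P C x3 x4 x5 x7 =
      (C.a2 * C.b1 - C.a1 * C.b2) * dvg_dx3 P x3 x5 x7 * dvz_dx4 P x3 x4 x5 x7 := by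
    rw [P.dve_dx3_eq C h3 h4 h5 h7, P.dmu_dx3_eq C h3 h4 h5 h7, P.dmu_dx4_eq C h4 h7,
      P.dve_dx4_eq C h4 h7]
    ring
  have hG := P.dvg_dx3_pos h3 h5 h7
  have hZ := P.dvz_dx4_pos h3 h4 h5 h7
  refine ⟨hdet, hG, hZ, ?_⟩
  rw [hdet, mul_assoc, mul_ne_zero_iff_right (mul_pos hG hZ).ne', ← neg_sub, neg_ne_zero]
end

section
/- Along a singular arc of the first control on which the second-order coefficient vanishes, the adjoint components λ5 and λ6 are constant with explicit values. Precisely: let a < b, let x3, x4, x5, x6, x7 : [a,b] → ℝ be continuous with x3(t), x4(t), x5(t) ≥ 0 and x6(t), x7(t) > 0 on [a,b], and let λ4, λ5, λ6 : [a,b] → ℝ be absolutely continuous with λ5 and λ6 satisfying a.e. the adjoint equations λ̇5 = x6·(∂v_g/∂x5·λ̄3 + ∂v_z/∂x5·λ4 − ∂v_e/∂x5·λ5 − ∂μ/∂x5·λ6) and λ̇6 = v_g·λ̄3 + v_z·λ4 − v_e·λ5 − μ·λ6, where λ̄3 is a constant. Assume λ̄3 − b1·λ5(t) − a1·λ6(t)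 = 0 for all t ∈ [a,b], x4(t)·(−λ4(t) + b2·λ5(t) + a2·λ6(t)) = 0 for all t ∈ [a,b], and b1·μ̄ − a1·v̄ ≠ 0. Then λ5(t) ≡ λ̄3·μ̄/(b1·μ̄ − a1·v̄) and λ6(t) ≡ −λ̄3·v̄/(b1·μ̄ − a1·v̄) on [a,b]. -/
open MeasureTheory Set

/-!
On the arc, `λ̄3 - b1 λ5 - a1 λ6 ≡ 0`, and `x4 (-λ4 + b2 λ5 + a2 λ6) ≡ 0` forces both `v_z` and
`∂v_z/∂x5` to annihilate `-λ4 + b2 λ5 + a2 λ6`, since each of them vanishes when `x4 = 0`.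
As `μ` and `v_e` are affine in `(v_g, v_z)`, the right-hand side of the `λ5` equation then vanishes,
so `λ5` is constant, and with it `λ6`. The right-hand side of the `λ6` equation reduces to the
constant `-(v̄ λ5 + μ̄ λ6)`, which must vanish because `λ6` is constant on an interval of positive
length. The two linear relations `b1 λ5 + a1 λ6 = λ̄3` and `v̄ λ5 + μ̄ λ6 = 0` determine `λ5, λ6`.
-/

theorem SolvesODE.eq_add_mul_of_eqOn {x f : ℝ → ℝ} {a b c : ℝ} (hx : SolvesODE x f a b)
    (hf : EqOn f (fun _ => c) (Icc a b)) {t : ℝ} (ht : t ∈ Icc a b) :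
    x t = x a + (t - a) * c := by
  have hsub : uIcc a t ⊆ Icc a b := by
    rw [uIcc_of_le ht.1]
    exact Icc_subset_Icc_right ht.2
  rw [hx.2 t ht, intervalIntegral.integral_congr (hf.mono hsub)]
  simp

theorem SolvesODE.eq_left_of_eqOn_zero {x f : ℝ → ℝ} {a b : ℝ} (hx : SolvesODE x f a b)
    (hf : EqOn f 0 (Icc a b)) : ∀ t ∈ Icc a b, x t = x a := fun t ht => by
  simpa using hx.eq_add_mul_of_eqOn (c := 0) hf ht

theorem vg_differentiableAt_x5 (P : BioParams) {x3 x5 x7 : ℝ} (h3 : 0 ≤ x3) (h5 : 0 ≤ x5)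
    (h7 : 0 < x7) : DifferentiableAt ℝ (fun y => vg P x3 y x7) x5 := by
  have := P.kg_pos
  have := P.kieg_pos
  unfold vg
  exact (differentiableAt_const _).div (by fun_prop) (by positivity)

theorem vz_differentiableAt_x5 (P : BioParams) {x3 x4 x5 x7 : ℝ} (h3 : 0 ≤ x3) (h4 : 0 ≤ x4)
    (h5 : 0 ≤ x5) (h7 : 0 < x7) : DifferentiableAt ℝ (fun y => vz P x3 x4 y x7) x5 := by
  have := P.kz_pos
  have := P.kig_pos
  have := P.kiez_pos
  unfold vz
  exact (differentiableAt_const _).div (by fun_prop) (by positivity)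

theorem deriv_x5_affine_vg_vz (P : BioParams) (p q r : ℝ) {x3 x4 x5 x7 : ℝ} (h3 : 0 ≤ x3)
    (h4 : 0 ≤ x4) (h5 : 0 ≤ x5) (h7 : 0 < x7) :
    deriv (fun y => p * vg P x3 y x7 + q * vz P x3 x4 y x7 + r) x5 =
      p * dvg_dx5 P x3 x5 x7 + q * dvz_dx5 P x3 x4 x5 x7 := by
  have hg := vg_differentiableAt_x5 P h3 h5 h7
  have hz := vz_differentiableAt_x5 P h3 h4 h5 h7
  rw [deriv_add_const, deriv_fun_add (hg.const_mul p) (hz.const_mul q), deriv_const_mul p hg,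
    deriv_const_mul q hz, dvg_dx5, dvz_dx5]

theorem dve_dx5_eq (P : BioParams) (C : AffineCoeffs) {x3 x4 x5 x7 : ℝ} (h3 : 0 ≤ x3)
    (h4 : 0 ≤ x4) (h5 : 0 ≤ x5) (h7 : 0 < x7) :
    dve_dx5 P C x3 x4 x5 x7 = C.b1 * dvg_dx5 P x3 x5 x7 + C.b2 * dvz_dx5 P x3 x4 x5 x7 :=
  deriv_x5_affine_vg_vz P _ _ _ h3 h4 h5 h7

theorem dmu_dx5_eq (P : BioParams) (C : AffineCoeffs) {x3 x4 x5 x7 : ℝ} (h3 : 0 ≤ x3)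
    (h4 : 0 ≤ x4) (h5 : 0 ≤ x5) (h7 : 0 < x7) :
    dmu_dx5 P C x3 x4 x5 x7 = C.a1 * dvg_dx5 P x3 x5 x7 + C.a2 * dvz_dx5 P x3 x4 x5 x7 :=
  deriv_x5_affine_vg_vz P _ _ _ h3 h4 h5 h7

theorem vz_mul_eq_zero_of_mul_eq_zero (P : BioParams) {x3 x4 x5 x7 d : ℝ} (h : x4 * d = 0) :
    vz P x3 x4 x5 x7 * d = 0 := by
  have hfactor : vz P x3 x4 x5 x7 * d =
      P.vzmax * x7 ^ 2 / ((P.kz * x7 + x4) * (x7 + x3 / P.kig) * (x7 + x5 / P.kiez)) *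
        (x4 * d) := by
    unfold vz
    ring
  rw [hfactor, h, mul_zero]

theorem dvz_dx5_mul_eq_zero_of_mul_eq_zero (P : BioParams) {x3 x4 x5 x7 d : ℝ}
    (h : x4 * d = 0) : dvz_dx5 P x3 x4 x5 x7 * d = 0 := by
  rcases mul_eq_zero.1 h with rfl | rfl
  · simp [dvz_dx5, vz]
  · exact mul_zero _

theorem stmt6_general (P : BioParams) (C : AffineCoeffs) (lam3 : ℝ)
    (a b : ℝ) (hab : a < b)
    (x3 x4 x5 x6 x7 : ℝ → ℝ)
    (h3 : ∀ t ∈ Set.Icc a b, 0 ≤ x3 t) (h4 : ∀ t ∈ Set.Icc a b, 0 ≤ x4 t)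
    (h5 : ∀ t ∈ Set.Icc a b, 0 ≤ x5 t)
    (h7 : ∀ t ∈ Set.Icc a b, 0 < x7 t)
    (l4 l5 l6 : ℝ → ℝ)
    -- `λ5` satisfies its adjoint equation a.e. on `[a,b]`
    (hl5 : SolvesODE l5
      (fun s => x6 s * (dvg_dx5 P (x3 s) (x5 s) (x7 s) * lam3 +
          dvz_dx5 P (x3 s) (x4 s) (x5 s) (x7 s) * l4 s -
          dve_dx5 P C (x3 s) (x4 s) (x5 s) (x7 s) * l5 s -
          dmu_dx5 P C (x3 s) (x4 s) (x5 s) (x7 s) * l6 s)) a b)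
    -- `λ6` satisfies its adjoint equation a.e. on `[a,b]`
    (hl6 : SolvesODE l6
      (fun s => vg P (x3 s) (x5 s) (x7 s) * lam3 +
          vz P (x3 s) (x4 s) (x5 s) (x7 s) * l4 s -
          ve P C (x3 s) (x4 s) (x5 s) (x7 s) * l5 s -
          mu P C (x3 s) (x4 s) (x5 s) (x7 s) * l6 s) a b)
    (hA : ∀ t ∈ Set.Icc a b, lam3 - C.b1 * l5 t - C.a1 * l6 t = 0)
    (hB : ∀ t ∈ Set.Icc a b, x4 t * (-l4 t + C.b2 * l5 t + C.a2 * l6 t) = 0)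
    (hD : C.b1 * C.mubar - C.a1 * C.vbar ≠ 0) :
    ∀ t ∈ Set.Icc a b,
      l5 t = lam3 * C.mubar / (C.b1 * C.mubar - C.a1 * C.vbar) ∧
      l6 t = -(lam3 * C.vbar) / (C.b1 * C.mubar - C.a1 * C.vbar) := by
  have ha : a ∈ Icc a b := left_mem_Icc.2 hab.le
  have hb : b ∈ Icc a b := right_mem_Icc.2 hab.le
  have hl5_const := hl5.eq_left_of_eqOn_zero fun s hs => by
    dsimp only [Pi.zero_apply]
    rw [dve_dx5_eq P C (h3 s hs) (h4 s hs) (h5 s hs) (h7 s hs),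
      dmu_dx5_eq P C (h3 s hs) (h4 s hs) (h5 s hs) (h7 s hs)]
    linear_combination x6 s * dvg_dx5 P (x3 s) (x5 s) (x7 s) * hA s hs -
      x6 s * dvz_dx5_mul_eq_zero_of_mul_eq_zero P (hB s hs)
  have hl6_const : ∀ t ∈ Icc a b, l6 t = l6 a := fun t ht =>
    mul_left_cancel₀ C.a1_pos.ne' <| by
      linear_combination hA a ha - hA t ht - C.b1 * hl5_const t ht
  have hlin : C.vbar * l5 a + C.mubar * l6 a = 0 := by
    have h := hl6.eq_add_mul_of_eqOn (c := -(C.vbar * l5 a + C.mubar * l6 a)) (fun s hs => by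
      dsimp only
      rw [ve, mu, ← hl5_const s hs, ← hl6_const s hs]
      linear_combination vg P (x3 s) (x5 s) (x7 s) * hA s hs -
        vz_mul_eq_zero_of_mul_eq_zero P (hB s hs)) hb
    rw [hl6_const b hb] at h
    have hprod : (b - a) * (C.vbar * l5 a + C.mubar * l6 a) = 0 := by linear_combination h
    exact (mul_eq_zero.1 hprod).resolve_left (sub_pos.2 hab).ne'
  intro t ht
  rw [hl5_const t ht, hl6_const t ht, eq_div_iff hD, eq_div_iff hD]
  exact ⟨by linear_combination -C.mubar * hA a ha - C.a1 * hlin,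
    by linear_combination C.vbar * hA a ha + C.b1 * hlin⟩

/-- along a singular arc of the first control on which the second-order
coefficient vanishes, i.e. where `λ̄3 - b1 λ5 - a1 λ6 ≡ 0` and
`x4 (-λ4 + b2 λ5 + a2 λ6) ≡ 0`, the adjoint components `λ5, λ6` are constant with the
explicit values `λ5 ≡ λ̄3 μ̄/(b1 μ̄ - a1 v̄)` and `λ6 ≡ -λ̄3 v̄/(b1 μ̄ - a1 v̄)`. -/
theorem stmt6 (P : BioParams) (C : AffineCoeffs) (lam3 : ℝ)
    (a b : ℝ) (hab : a < b)
    (x3 x4 x5 x6 x7 : ℝ → ℝ)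
    (hc3 : ContinuousOn x3 (Set.Icc a b)) (hc4 : ContinuousOn x4 (Set.Icc a b))
    (hc5 : ContinuousOn x5 (Set.Icc a b)) (hc6 : ContinuousOn x6 (Set.Icc a b))
    (hc7 : ContinuousOn x7 (Set.Icc a b))
    (h3 : ∀ t ∈ Set.Icc a b, 0 ≤ x3 t) (h4 : ∀ t ∈ Set.Icc a b, 0 ≤ x4 t)
    (h5 : ∀ t ∈ Set.Icc a b, 0 ≤ x5 t)
    (h6 : ∀ t ∈ Set.Icc a b, 0 < x6 t) (h7 : ∀ t ∈ Set.Icc a b, 0 < x7 t)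
    (l4 l5 l6 : ℝ → ℝ)
    -- `λ4` is absolutely continuous on `[a,b]`
    (hl4ac : ∃ g : ℝ → ℝ, IntervalIntegrable g MeasureTheory.volume a b ∧
      ∀ t ∈ Set.Icc a b, l4 t = l4 a + ∫ s in a..t, g s)
    -- `λ5` satisfies its adjoint equation a.e. on `[a,b]`
    (hl5 : SolvesODE l5
      (fun s => x6 s * (dvg_dx5 P (x3 s) (x5 s) (x7 s) * lam3 +
          dvz_dx5 P (x3 s) (x4 s) (x5 s) (x7 s) * l4 s -
          dve_dx5 P C (x3 s) (x4 s) (x5 s) (x7 s) * l5 s -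
          dmu_dx5 P C (x3 s) (x4 s) (x5 s) (x7 s) * l6 s)) a b)
    -- `λ6` satisfies its adjoint equation a.e. on `[a,b]`
    (hl6 : SolvesODE l6
      (fun s => vg P (x3 s) (x5 s) (x7 s) * lam3 +
          vz P (x3 s) (x4 s) (x5 s) (x7 s) * l4 s -
          ve P C (x3 s) (x4 s) (x5 s) (x7 s) * l5 s -
          mu P C (x3 s) (x4 s) (x5 s) (x7 s) * l6 s) a b)
    (hA : ∀ t ∈ Set.Icc a b, lam3 - C.b1 * l5 t - C.a1 * l6 t = 0)
    (hB : ∀ t ∈ Set.Icc a b, x4 t * (-l4 t + C.b2 * l5 t + C.a2 * l6 t) = 0)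
    (hD : C.b1 * C.mubar - C.a1 * C.vbar ≠ 0) :
    ∀ t ∈ Set.Icc a b,
      l5 t = lam3 * C.mubar / (C.b1 * C.mubar - C.a1 * C.vbar) ∧
      l6 t = -(lam3 * C.vbar) / (C.b1 * C.mubar - C.a1 * C.vbar) :=
  stmt6_general P C lam3 a b hab x3 x4 x5 x6 x7 h3 h4 h5 h7 l4 l5 l6 hl5 hl6 hA hB hD
end

section
/- For all x3, x4, x5 ≥ 0 and x7 > 0, the determinant of the 2×2 matrix with rows (∂v_g/∂x5, ∂v_z/∂x5) and (v_g, v_z) equals v_g·v_z·x7·(k_ie_g − k_ie_z)/((k_ie_g·x7 + x5)·(k_ie_z·x7 + x5)). Consequently, if k_ie_g ≠ k_ie_z, x3 > 0 and x4 > 0, then the only pair (λ3, λ4) ∈ ℝ² satisfying ∂v_g/∂x5·λ3 + ∂v_z/∂x5·λ4 = 0 and v_g·λ3 + v_z·λ4 = 0 is λ3 = λ4 = 0. -/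
open MeasureTheory Set

/-! Both rates depend on `x5` only through a factor `1 / (k x7 + x5)`, with `k = k_ie_g`
resp. `k_ie_z`, so `∂v/∂x5 = -v / (k x7 + x5)`. The determinant is therefore `v_g v_z` times
the difference of the two reciprocals, which is nonzero when `k_ie_g ≠ k_ie_z` and both rates
are positive. -/

theorem deriv_div_mul_add_div (c M t k y : ℝ) (hM : M ≠ 0) (hk : k ≠ 0)
    (hy : k * t + y ≠ 0) :
    deriv (fun y => c / (M * (t + y / k))) y = -(c / (M * (t + y / k))) / (k * t + y) := by
  have hty : t + y / k ≠ 0 := by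
    rwa [← mul_ne_zero_iff_left hk, mul_add, mul_div_cancel₀ _ hk]
  have hden : HasDerivAt (fun y => M * (t + y / k)) (M * (1 / k)) y :=
    (((hasDerivAt_id y).div_const k).const_add t).const_mul M
  rw [((hasDerivAt_const y c).fun_div hden (mul_ne_zero hM hty)).deriv]
  field_simp
  ring

section BioParams

variable (P : BioParams) {x3 x4 x5 x7 : ℝ}

theorem dvg_dx5_eq (h3 : 0 ≤ x3) (h5 : 0 ≤ x5) (h7 : 0 < x7) :
    dvg_dx5 P x3 x5 x7 = -vg P x3 x5 x7 / (P.kieg * x7 + x5) := by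
  have := P.kg_pos
  have := P.kieg_pos
  exact deriv_div_mul_add_div _ _ _ _ _ (by positivity) (by positivity) (by positivity)

theorem dvz_dx5_eq (h3 : 0 ≤ x3) (h4 : 0 ≤ x4) (h5 : 0 ≤ x5) (h7 : 0 < x7) :
    dvz_dx5 P x3 x4 x5 x7 = -vz P x3 x4 x5 x7 / (P.kiez * x7 + x5) := by
  have := P.kz_pos
  have := P.kig_pos
  have := P.kiez_pos
  exact deriv_div_mul_add_div _ _ _ _ _ (by positivity) (by positivity) (by positivity)

theorem vg_pos (h3 : 0 < x3) (h5 : 0 ≤ x5) (h7 : 0 < x7) : 0 < vg P x3 x5 x7 := by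
  have := P.vgmax_pos
  have := P.kg_pos
  have := P.kieg_pos
  unfold vg
  positivity

theorem vz_pos (h3 : 0 ≤ x3) (h4 : 0 < x4) (h5 : 0 ≤ x5) (h7 : 0 < x7) :
    0 < vz P x3 x4 x5 x7 := by
  have := P.vzmax_pos
  have := P.kz_pos
  have := P.kig_pos
  have := P.kiez_pos
  unfold vz
  positivity

theorem dvg_dx5_mul_vz_sub_dvz_dx5_mul_vg (h3 : 0 ≤ x3) (h4 : 0 ≤ x4) (h5 : 0 ≤ x5)
    (h7 : 0 < x7) :
    dvg_dx5 P x3 x5 x7 * vz P x3 x4 x5 x7 - dvz_dx5 P x3 x4 x5 x7 * vg P x3 x5 x7 =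
      vg P x3 x5 x7 * vz P x3 x4 x5 x7 * x7 * (P.kieg - P.kiez) /
        ((P.kieg * x7 + x5) * (P.kiez * x7 + x5)) := by
  have := P.kieg_pos
  have := P.kiez_pos
  have hg : P.kieg * x7 + x5 ≠ 0 := by positivity
  have hz : P.kiez * x7 + x5 ≠ 0 := by positivity
  rw [dvg_dx5_eq P h3 h5 h7, dvz_dx5_eq P h3 h4 h5 h7]
  field_simp
  ring

end BioParams

theorem eq_zero_of_mul_sub_mul_ne_zero {a b c d x y : ℝ} (hdet : a * d - b * c ≠ 0)
    (h₁ : a * x + b * y = 0) (h₂ : c * x + d * y = 0) : x = 0 ∧ y = 0 := by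
  constructor
  · apply (mul_eq_zero.mp _).resolve_left hdet
    linear_combination d * h₁ - b * h₂
  · apply (mul_eq_zero.mp _).resolve_left hdet
    linear_combination a * h₂ - c * h₁

/-- for `x3, x4, x5 ≥ 0` and `x7 > 0`, the determinant of the matrix with
rows `(∂v_g/∂x5, ∂v_z/∂x5)` and `(v_g, v_z)` equals
`v_g v_z x7 (k_ie_g - k_ie_z)/((k_ie_g x7 + x5)(k_ie_z x7 + x5))`; consequently, if
`k_ie_g ≠ k_ie_z`, `x3 > 0` and `x4 > 0`, the only solution `(λ3, λ4)` of the
homogeneous system is the trivial one. -/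
theorem stmt8 (P : BioParams) (x3 x4 x5 x7 : ℝ)
    (h3 : 0 ≤ x3) (h4 : 0 ≤ x4) (h5 : 0 ≤ x5) (h7 : 0 < x7) :
    dvg_dx5 P x3 x5 x7 * vz P x3 x4 x5 x7 - dvz_dx5 P x3 x4 x5 x7 * vg P x3 x5 x7 =
      vg P x3 x5 x7 * vz P x3 x4 x5 x7 * x7 * (P.kieg - P.kiez) /
        ((P.kieg * x7 + x5) * (P.kiez * x7 + x5)) ∧
    (P.kieg ≠ P.kiez → 0 < x3 → 0 < x4 →
      ∀ l3 l4 : ℝ,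
        dvg_dx5 P x3 x5 x7 * l3 + dvz_dx5 P x3 x4 x5 x7 * l4 = 0 →
        vg P x3 x5 x7 * l3 + vz P x3 x4 x5 x7 * l4 = 0 →
        l3 = 0 ∧ l4 = 0) := by
  have hdet := dvg_dx5_mul_vz_sub_dvz_dx5_mul_vg P h3 h4 h5 h7
  refine ⟨hdet, fun hne hx3 hx4 l3 l4 => eq_zero_of_mul_sub_mul_ne_zero ?_⟩
  have := vg_pos P hx3 h5 h7
  have := vz_pos P h3 hx4 h5 h7
  have := P.kieg_pos
  have := P.kiez_pos
  rw [hdet]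
  exact div_ne_zero (mul_ne_zero (by positivity) (sub_ne_zero.mpr hne)) (by positivity)
end

section
/- Invariance of the physical domain. Let F > 0, let v_gmax, v_zmax, k_g, k_ie_g, k_z, k_ie_z, k_ig be positive constants, let μ, v_e : ℝ^4 → ℝ be smooth with v_e ≥ 0, let u = (u1,u2) : [0,T] → [0,1]² be measurable, and let x : [0,T] → ℝ^7 be absolutely continuous satisfying the seven-dimensional control system a.e. on [0,T] with x(0) ∈ D = {x ∈ ℝ^7 : x_i ≥ 0 for i = 1,…,6, x1 + x2 > 0, x7 > 0}. Then for every t ∈ [0,T]: x_i(t) ≥ 0 for i = 1,…,6, x1(t) + x2(t) > 0, and x7(t) = x7(0) + F·t ≥ x7(0) > 0. -/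
open MeasureTheory Set
open Topology Filter

lemma SolvesODE.contOn {x f : ℝ → ℝ} {T : ℝ} (hT : (0:ℝ) ≤ T) (h : SolvesODE x f 0 T) :
    ContinuousOn x (Set.Icc 0 T) := by
  have h1 : ContinuousOn (fun t => x 0 + ∫ s in (0:ℝ)..t, f s) (Set.uIcc 0 T) :=
    continuousOn_const.add (intervalIntegral.continuousOn_primitive_interval' h.1 left_mem_uIcc)
  rw [Set.uIcc_of_le hT] at h1
  exact h1.congr fun t ht => h.2 t ht

lemma SolvesODE.sub_eq {x f : ℝ → ℝ} {T a b : ℝ} (h : SolvesODE x f 0 T)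
    (ha : a ∈ Set.Icc 0 T) (hb : b ∈ Set.Icc 0 T) :
    x b - x a = ∫ s in a..b, f s := by
  have hT : (0:ℝ) ≤ T := le_trans ha.1 ha.2
  have hmem : ∀ c : ℝ, c ∈ Set.Icc 0 T → c ∈ Set.uIcc 0 T := fun c hc => by
    rw [Set.uIcc_of_le hT]; exact hc
  have hib : IntervalIntegrable f volume 0 b :=
    h.1.mono_set (Set.uIcc_subset_uIcc left_mem_uIcc (hmem b hb))
  have hia : IntervalIntegrable f volume 0 a :=
    h.1.mono_set (Set.uIcc_subset_uIcc left_mem_uIcc (hmem a ha))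
  rw [h.2 a ha, h.2 b hb]
  rw [add_sub_add_left_eq_sub]
  exact intervalIntegral.integral_interval_sub_left hib hia

/-- Core invariance lemma: if whenever the solution touches `0` the vector field is
nonnegative slightly to the right (while the solution is nonpositive), then the
solution stays nonnegative. -/
lemma nonneg_invariant {x f : ℝ → ℝ} {T : ℝ} (hT : (0:ℝ) ≤ T)
    (hsol : SolvesODE x f 0 T) (hx0 : 0 ≤ x 0)
    (key : ∀ σ ∈ Set.Icc 0 T, x σ = 0 →
      ∃ δ > 0, ∀ s ∈ Set.Icc 0 T, σ ≤ s → s ≤ σ + δ → x s ≤ 0 → 0 ≤ f s) :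
    ∀ t ∈ Set.Icc 0 T, 0 ≤ x t := by
  have hxc : ContinuousOn x (Set.Icc 0 T) := hsol.contOn hT
  by_contra hcon
  push_neg at hcon
  obtain ⟨τ, hτ, hτneg⟩ := hcon
  have hsub : Set.Icc 0 τ ⊆ Set.Icc 0 T := Set.Icc_subset_Icc le_rfl hτ.2
  set S : Set ℝ := Set.Icc 0 τ ∩ x ⁻¹' Set.Ici 0 with hS
  have hSclosed : IsClosed S :=
    (hxc.mono hsub).preimage_isClosed_of_isClosed isClosed_Icc isClosed_Ici
  have hSne : S.Nonempty := ⟨0, ⟨le_rfl, hτ.1⟩, hx0⟩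
  have hSbdd : BddAbove S := ⟨τ, fun s hs => hs.1.2⟩
  set σ := sSup S with hσdef
  have hσS : σ ∈ S := hSclosed.csSup_mem hSne hSbdd
  have hσT : σ ∈ Set.Icc 0 T := hsub hσS.1
  have hστ : σ < τ := by
    rcases lt_or_eq_of_le hσS.1.2 with h | h
    · exact h
    · exact absurd (h ▸ hσS.2) (not_le.2 hτneg)
  have hneg : ∀ s, σ < s → s ≤ τ → x s < 0 := by
    intro s hs1 hs2
    by_contra hns
    push_neg at hns
    have : s ∈ S := ⟨⟨le_trans hσS.1.1 hs1.le, hs2⟩, hns⟩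
    exact absurd (le_csSup hSbdd this) (not_le.2 hs1)
  have hxσle : x σ ≤ 0 := by
    have hnb : (𝓝[Set.Ioc σ τ] σ).NeBot := left_nhdsWithin_Ioc_neBot hστ
    have hten : Filter.Tendsto x (𝓝[Set.Ioc σ τ] σ) (𝓝 (x σ)) :=
      (hxc σ hσT).mono fun s hs =>
        ⟨le_trans hσT.1 hs.1.le, le_trans hs.2 hτ.2⟩
    refine le_of_tendsto hten ?_
    filter_upwards [self_mem_nhdsWithin] with s hs
    exact (hneg s hs.1 hs.2).le
  have hxσ : x σ = 0 := le_antisymm hxσle hσS.2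
  obtain ⟨δ, hδpos, hkey⟩ := key σ hσT hxσ
  set t := min (σ + δ) τ with ht
  have hσt : σ < t := lt_min (by linarith) hστ
  have htτ : t ≤ τ := min_le_right _ _
  have htT : t ∈ Set.Icc 0 T := ⟨le_trans hσT.1 hσt.le, le_trans htτ hτ.2⟩
  have hxle : ∀ s ∈ Set.Icc σ t, x s ≤ 0 := by
    intro s hs
    rcases eq_or_lt_of_le hs.1 with h | h
    · rw [← h]; exact hxσ.le
    · exact (hneg s h (le_trans hs.2 htτ)).le
  have hf : ∀ s ∈ Set.Icc σ t, 0 ≤ f s := by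
    intro s hs
    have hsT : s ∈ Set.Icc 0 T := ⟨le_trans hσT.1 hs.1, le_trans (le_trans hs.2 htτ) hτ.2⟩
    exact hkey s hsT hs.1 (le_trans hs.2 (min_le_left _ _)) (hxle s hs)
  have hint : 0 ≤ ∫ s in σ..t, f s := intervalIntegral.integral_nonneg hσt.le hf
  have hdiff : x t - x σ = ∫ s in σ..t, f s := hsol.sub_eq hσT htT
  have : 0 ≤ x t := by rw [hxσ] at hdiff; linarith
  exact absurd this (not_le.2 (hneg t hσt htτ))

/-- Nonnegativity for the linear equation `ẋ = g x` with `g` continuous on `[0,T]`. -/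
lemma linear_nonneg {x g : ℝ → ℝ} {T : ℝ} (hT : (0:ℝ) ≤ T)
    (hsol : SolvesODE x (fun s => g s * x s) 0 T)
    (hg : ContinuousOn g (Set.Icc 0 T)) (hx0 : 0 ≤ x 0) :
    ∀ t ∈ Set.Icc 0 T, 0 ≤ x t := by
  have hxc : ContinuousOn x (Set.Icc 0 T) := hsol.contOn hT
  set c : ℝ → ℝ := fun s => max 0 (min s T) with hc
  have hcc : Continuous c := continuous_const.max (continuous_id.min continuous_const)
  have hcm : ∀ s, c s ∈ Set.Icc 0 T := fun s =>
    ⟨le_max_left _ _, max_le hT (min_le_right _ _)⟩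
  have hcid : ∀ s ∈ Set.Icc 0 T, c s = s := fun s hs => by
    simp only [hc]; rw [min_eq_left hs.2, max_eq_right hs.1]
  have hgc : Continuous (fun s => g (c s)) := hg.comp_continuous hcc hcm
  have hxcc : Continuous (fun s => x (c s)) := hxc.comp_continuous hcc hcm
  set G : ℝ → ℝ := fun s => g (c s) * x (c s) with hG
  have hGc : Continuous G := hgc.mul hxcc
  set Y : ℝ → ℝ := fun t => x 0 + ∫ s in (0:ℝ)..t, G s with hY
  have hYx : ∀ t ∈ Set.Icc 0 T, Y t = x t := by
    intro t ht
    rw [hsol.2 t ht, hY]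
    simp only [add_right_inj]
    apply intervalIntegral.integral_congr
    intro s hs
    have hs' : s ∈ Set.Icc 0 T := by
      rw [Set.uIcc_of_le ht.1] at hs
      exact ⟨hs.1, le_trans hs.2 ht.2⟩
    simp only [hG, hcid s hs']
  set E : ℝ → ℝ := fun t => ∫ s in (0:ℝ)..t, g (c s) with hE
  have hYd : ∀ t : ℝ, HasDerivAt Y (G t) t := by
    intro t
    exact (intervalIntegral.integral_hasDerivAt_right (hGc.intervalIntegrable _ _)
      hGc.aestronglyMeasurable.stronglyMeasurableAtFilter hGc.continuousAt).const_add _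
  have hEd : ∀ t : ℝ, HasDerivAt E (g (c t)) t := by
    intro t
    exact intervalIntegral.integral_hasDerivAt_right (hgc.intervalIntegrable _ _)
      hgc.aestronglyMeasurable.stronglyMeasurableAtFilter hgc.continuousAt
  set Φ : ℝ → ℝ := fun t => Y t * Real.exp (-E t) with hΦ
  have hYcont : Continuous Y := continuous_iff_continuousAt.mpr fun t => (hYd t).continuousAt
  have hEcont : Continuous E := continuous_iff_continuousAt.mpr fun t => (hEd t).continuousAt
  have hΦc : Continuous Φ := hYcont.mul (Real.continuous_exp.comp hEcont.neg)
  have hΦd : ∀ t ∈ Set.Ico 0 T, HasDerivWithinAt Φ 0 (Set.Ici t) t := by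
    intro t htI
    have ht : t ∈ Set.Icc 0 T := Set.Ico_subset_Icc_self htI
    have h2 : HasDerivAt (fun s => Real.exp (-E s)) (Real.exp (-E t) * -g (c t)) t :=
      (hEd t).neg.exp
    have h1 : HasDerivAt Φ (G t * Real.exp (-E t) + Y t * (Real.exp (-E t) * -g (c t))) t :=
      (hYd t).mul h2
    have hz : G t * Real.exp (-E t) + Y t * (Real.exp (-E t) * -g (c t)) = 0 := by
      have hct : c t = t := hcid t ht
      have hYt : Y t = x t := hYx t ht
      simp only [hG, hct, hYt]
      ring
    rw [hz] at h1
    exact h1.hasDerivWithinAt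
  have hconst := constant_of_has_deriv_right_zero (hΦc.continuousOn) hΦd
  intro t ht
  have hΦt : Φ t = Φ 0 := hconst t ht
  have hE0 : E 0 = 0 := intervalIntegral.integral_same
  have hY0 : Y 0 = x 0 := by simp [hY]
  have hΦ0 : Φ 0 = x 0 := by simp [hΦ, hE0, hY0]
  have hYt : Y t = x 0 * Real.exp (E t) := by
    have h := hΦt
    rw [hΦ0] at h
    have h2 := congrArg (fun z => z * Real.exp (E t)) h
    simp only [hΦ] at h2
    rwa [mul_assoc, ← Real.exp_add, neg_add_cancel, Real.exp_zero, mul_one] at h2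
  rw [← hYx t ht, hYt]
  exact mul_nonneg hx0 (Real.exp_nonneg _)


/-- invariance of the physical domain `D`: any absolutely continuous
solution of the seven-dimensional control system on `[0,T]` with measurable controls in
`[0,1]²`, smooth `μ`, smooth nonnegative `v_e`, and initial condition in `D` satisfies
`x_i(t) ≥ 0` for `i = 1,…,6`, `x1(t) + x2(t) > 0`, and
`x7(t) = x7(0) + F t ≥ x7(0) > 0` for all `t ∈ [0,T]`. -/
theorem stmt12 (P : BioParams) (F T : ℝ) (hF : 0 < F) (hT : 0 ≤ T)
    (mu ve : ℝ → ℝ → ℝ → ℝ → ℝ)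
    (hmu_smooth : ContDiff ℝ (⊤ : ℕ∞) (fun p : ℝ × ℝ × ℝ × ℝ => mu p.1 p.2.1 p.2.2.1 p.2.2.2))
    (hve_smooth : ContDiff ℝ (⊤ : ℕ∞) (fun p : ℝ × ℝ × ℝ × ℝ => ve p.1 p.2.1 p.2.2.1 p.2.2.2))
    (hve_nonneg : ∀ y3 y4 y5 y7 : ℝ, 0 ≤ ve y3 y4 y5 y7)
    (u1 u2 : ℝ → ℝ) (hu1m : Measurable u1) (hu2m : Measurable u2)
    (hu : ∀ t ∈ Set.Icc 0 T, u1 t ∈ Set.Icc (0:ℝ) 1 ∧ u2 t ∈ Set.Icc (0:ℝ) 1)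
    (x1 x2 x3 x4 x5 x6 x7 : ℝ → ℝ)
    (hx1 : SolvesODE x1 u1 0 T)
    (hx2 : SolvesODE x2 u2 0 T)
    (hx3 : SolvesODE x3 (fun s => F * u1 s - vg P (x3 s) (x5 s) (x7 s) * x6 s) 0 T)
    (hx4 : SolvesODE x4
      (fun s => F * u2 s - vz P (x3 s) (x4 s) (x5 s) (x7 s) * x6 s) 0 T)
    (hx5 : SolvesODE x5 (fun s => ve (x3 s) (x4 s) (x5 s) (x7 s) * x6 s) 0 T)
    (hx6 : SolvesODE x6 (fun s => mu (x3 s) (x4 s) (x5 s) (x7 s) * x6 s) 0 T)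
    (hx7 : SolvesODE x7 (fun _ => F) 0 T)
    -- the initial condition belongs to the domain `D`
    (h01 : 0 ≤ x1 0) (h02 : 0 ≤ x2 0) (h03 : 0 ≤ x3 0) (h04 : 0 ≤ x4 0)
    (h05 : 0 ≤ x5 0) (h06 : 0 ≤ x6 0) (h012 : 0 < x1 0 + x2 0) (h07 : 0 < x7 0) :
    ∀ t ∈ Set.Icc 0 T,
      0 ≤ x1 t ∧ 0 ≤ x2 t ∧ 0 ≤ x3 t ∧ 0 ≤ x4 t ∧ 0 ≤ x5 t ∧ 0 ≤ x6 t ∧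
      0 < x1 t + x2 t ∧
      x7 t = x7 0 + F * t ∧ x7 0 ≤ x7 t ∧ 0 < x7 t := by
  have hx3c : ContinuousOn x3 (Set.Icc 0 T) := hx3.contOn hT
  have hx4c : ContinuousOn x4 (Set.Icc 0 T) := hx4.contOn hT
  have hx5c : ContinuousOn x5 (Set.Icc 0 T) := hx5.contOn hT
  have hx7c : ContinuousOn x7 (Set.Icc 0 T) := hx7.contOn hT
  have h7 : ∀ t ∈ Set.Icc 0 T, x7 t = x7 0 + F * t := by
    intro t ht
    rw [hx7.2 t ht, intervalIntegral.integral_const]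
    simp [smul_eq_mul, mul_comm]
  have h7pos : ∀ t ∈ Set.Icc 0 T, 0 < x7 t := by
    intro t ht
    rw [h7 t ht]
    nlinarith [mul_nonneg hF.le ht.1]
  have hgc : ContinuousOn (fun s => mu (x3 s) (x4 s) (x5 s) (x7 s)) (Set.Icc 0 T) := by
    have h := hmu_smooth.continuous.comp_continuousOn
      ((hx3c.prodMk (hx4c.prodMk (hx5c.prodMk hx7c))))
    exact h
  have h6 : ∀ t ∈ Set.Icc 0 T, 0 ≤ x6 t := linear_nonneg hT hx6 hgc h06
  have h5 : ∀ t ∈ Set.Icc 0 T, 0 ≤ x5 t := by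
    intro t ht
    rw [hx5.2 t ht]
    have hi : 0 ≤ ∫ s in (0:ℝ)..t, ve (x3 s) (x4 s) (x5 s) (x7 s) * x6 s :=
      intervalIntegral.integral_nonneg ht.1 fun s hs =>
        mul_nonneg (hve_nonneg _ _ _ _) (h6 s ⟨hs.1, le_trans hs.2 ht.2⟩)
    linarith
  have h1 : ∀ t ∈ Set.Icc 0 T, x1 0 ≤ x1 t := by
    intro t ht
    rw [hx1.2 t ht]
    have hi : 0 ≤ ∫ s in (0:ℝ)..t, u1 s :=
      intervalIntegral.integral_nonneg ht.1 fun s hs =>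
        ((hu s ⟨hs.1, le_trans hs.2 ht.2⟩).1).1
    linarith
  have h2 : ∀ t ∈ Set.Icc 0 T, x2 0 ≤ x2 t := by
    intro t ht
    rw [hx2.2 t ht]
    have hi : 0 ≤ ∫ s in (0:ℝ)..t, u2 s :=
      intervalIntegral.integral_nonneg ht.1 fun s hs =>
        ((hu s ⟨hs.1, le_trans hs.2 ht.2⟩).2).1
    linarith
  have h3 : ∀ t ∈ Set.Icc 0 T, 0 ≤ x3 t := by
    apply nonneg_invariant hT hx3 h03
    intro σ hσ hσ0
    have hw : ContinuousWithinAt (fun s => P.kg * x7 s + x3 s) (Set.Icc 0 T) σ :=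
      (continuousWithinAt_const.mul (hx7c σ hσ)).add (hx3c σ hσ)
    have hwσ : 0 < P.kg * x7 σ + x3 σ := by
      rw [hσ0, add_zero]; exact mul_pos P.kg_pos (h7pos σ hσ)
    obtain ⟨δ, hδpos, hδ⟩ := Metric.continuousWithinAt_iff.1 hw _ hwσ
    refine ⟨δ/2, by linarith, fun s hs hσs hsδ hxs => ?_⟩
    have hds : dist s σ < δ := by
      rw [Real.dist_eq, abs_of_nonneg (by linarith : (0:ℝ) ≤ s - σ)]
      linarith
    have hden1 : 0 < P.kg * x7 s + x3 s := by
      have h := hδ hs hds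
      rw [Real.dist_eq] at h
      have h' := abs_lt.1 h
      linarith [h'.1]
    have h7s := h7pos s hs
    have h5s := h5 s hs
    have h6s := h6 s hs
    have hu1 : 0 ≤ u1 s := ((hu s hs).1).1
    have hden2 : 0 < x7 s + x5 s / P.kieg :=
      add_pos_of_pos_of_nonneg h7s (div_nonneg h5s P.kieg_pos.le)
    have hnum : P.vgmax * x3 s * x7 s ≤ 0 := by
      nlinarith [mul_nonneg (neg_nonneg.2 hxs) h7s.le, P.vgmax_pos]
    have hvg : vg P (x3 s) (x5 s) (x7 s) ≤ 0 := by
      unfold vg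
      exact div_nonpos_iff.2 (Or.inr ⟨hnum, (mul_pos hden1 hden2).le⟩)
    nlinarith [mul_nonneg (neg_nonneg.2 hvg) h6s, mul_nonneg hF.le hu1]
  have h4 : ∀ t ∈ Set.Icc 0 T, 0 ≤ x4 t := by
    apply nonneg_invariant hT hx4 h04
    intro σ hσ hσ0
    have hw : ContinuousWithinAt (fun s => P.kz * x7 s + x4 s) (Set.Icc 0 T) σ :=
      (continuousWithinAt_const.mul (hx7c σ hσ)).add (hx4c σ hσ)
    have hwσ : 0 < P.kz * x7 σ + x4 σ := by
      rw [hσ0, add_zero]; exact mul_pos P.kz_pos (h7pos σ hσ)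
    obtain ⟨δ, hδpos, hδ⟩ := Metric.continuousWithinAt_iff.1 hw _ hwσ
    refine ⟨δ/2, by linarith, fun s hs hσs hsδ hxs => ?_⟩
    have hds : dist s σ < δ := by
      rw [Real.dist_eq, abs_of_nonneg (by linarith : (0:ℝ) ≤ s - σ)]
      linarith
    have hden1 : 0 < P.kz * x7 s + x4 s := by
      have h := hδ hs hds
      rw [Real.dist_eq] at h
      have h' := abs_lt.1 h
      linarith [h'.1]
    have h7s := h7pos s hs
    have h5s := h5 s hs
    have h6s := h6 s hs
    have h3s := h3 s hs
    have hu2 : 0 ≤ u2 s := ((hu s hs).2).1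
    have hden2 : 0 < x7 s + x3 s / P.kig :=
      add_pos_of_pos_of_nonneg h7s (div_nonneg h3s P.kig_pos.le)
    have hden3 : 0 < x7 s + x5 s / P.kiez :=
      add_pos_of_pos_of_nonneg h7s (div_nonneg h5s P.kiez_pos.le)
    have hnum : P.vzmax * x4 s * x7 s ^ 2 ≤ 0 := by
      nlinarith [mul_nonneg (neg_nonneg.2 hxs) (sq_nonneg (x7 s)), P.vzmax_pos]
    have hvz : vz P (x3 s) (x4 s) (x5 s) (x7 s) ≤ 0 := by
      unfold vz
      exact div_nonpos_iff.2
        (Or.inr ⟨hnum, (mul_pos (mul_pos hden1 hden2) hden3).le⟩)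
    nlinarith [mul_nonneg (neg_nonneg.2 hvz) h6s, mul_nonneg hF.le hu2]
  intro t ht
  have h1t := h1 t ht
  have h2t := h2 t ht
  have h7t := h7 t ht
  refine ⟨le_trans h01 h1t, le_trans h02 h2t, h3 t ht, h4 t ht, h5 t ht, h6 t ht,
    by linarith, h7t, ?_, h7pos t ht⟩
  rw [h7t]
  nlinarith [mul_nonneg hF.le ht.1]
end
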